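/- arXiv:2310.20027 — 4 statements merged into one kernel-verified Lean document; each statement's English description precedes it below -/
import Mathlib

section
/- Let φ : ℝ → ℝ be a C^{1+α} periodic function (period 1) with α-Hölder seminorm of φ' bounded by M, and suppose ε, δ > 0 satisfy |φ(x) - φ(y)| < ε|x - y| whenever |x - y| > δ. Then sup|φ'| < (M/(α+1))·δ^α + ε. -/
/-!
Integrating the Hölder bound `|φ' s - φ' x| ≤ M |s - x| ^ α` over `[x - t, x + t]` gives
`|φ (x + t) - φ (x - t) - 2 t φ' x| ≤ 2 M t ^ (α + 1) / (α + 1)`. For `δ / 2 < t < δ` the two points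
`x ± t` are more than `δ` apart, so the chord `φ (x + t) - φ (x - t)` is smaller than `2 t ε`;
dividing by `2 t` gives `|φ' x| < M t ^ α / (α + 1) + ε ≤ M δ ^ α / (α + 1) + ε`.
-/

open intervalIntegral Filter Topology

theorem continuous_of_abs_sub_le_mul_rpow {f : ℝ → ℝ} {M α : ℝ} (hα : 0 < α)
    (hf : ∀ x y, |f x - f y| ≤ M * |x - y| ^ α) : Continuous f := by
  refine continuous_iff_continuousAt.2 fun y => tendsto_iff_dist_tendsto_zero.2 ?_
  have hbound : Tendsto (fun z => M * |z - y| ^ α) (𝓝 y) (𝓝 0) := by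
    have hcont : Continuous fun z : ℝ => M * |z - y| ^ α :=
      continuous_const.mul ((continuous_sub_right y).abs.rpow_const fun _ => Or.inr hα.le)
    simpa [Real.zero_rpow hα.ne'] using hcont.tendsto y
  exact squeeze_zero (fun _ => dist_nonneg) (fun z => (Real.dist_eq _ _).trans_le (hf z y)) hbound

theorem integral_abs_rpow_symm {α t : ℝ} (hα : 0 ≤ α) (ht : 0 ≤ t) :
    ∫ u in -t..t, |u| ^ α = 2 * (t ^ (α + 1) / (α + 1)) := by
  have hint : ∀ a b : ℝ, IntervalIntegrable (fun u : ℝ => |u| ^ α) MeasureTheory.volume a b :=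
    fun a b => (continuous_abs.rpow_const fun _ => Or.inr hα).intervalIntegrable a b
  have hright : ∫ u in (0 : ℝ)..t, |u| ^ α = t ^ (α + 1) / (α + 1) := by
    rw [integral_congr fun u hu => by rw [abs_of_nonneg (Set.uIcc_of_le ht ▸ hu).1],
      integral_rpow (Or.inl (by linarith)), Real.zero_rpow (by linarith), sub_zero]
  have hleft : ∫ u in -t..0, |u| ^ α = t ^ (α + 1) / (α + 1) := by
    simpa only [abs_neg, neg_zero, hright] using (integral_comp_neg (a := 0) (b := t)
      fun u => |u| ^ α).symm
  rw [← integral_add_adjacent_intervals (hint _ _) (hint _ _), hleft, hright, two_mul]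

theorem abs_sub_sub_two_mul_deriv_le {f : ℝ → ℝ} {M α : ℝ} (hα : 0 < α)
    (hf : Differentiable ℝ f) (hHolder : ∀ x y, |deriv f x - deriv f y| ≤ M * |x - y| ^ α)
    (x : ℝ) {t : ℝ} (ht : 0 ≤ t) :
    |f (x + t) - f (x - t) - 2 * t * deriv f x| ≤ 2 * t * (M * t ^ α / (α + 1)) := by
  have hcont := continuous_of_abs_sub_le_mul_rpow hα hHolder
  have hle : x - t ≤ x + t := by linarith
  have hftc : ∫ s in (x - t)..(x + t), (deriv f s - deriv f x)
      = f (x + t) - f (x - t) - 2 * t * deriv f x := by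
    rw [integral_sub (hcont.intervalIntegrable _ _) intervalIntegrable_const,
      integral_deriv_eq_sub (fun y _ => hf y) (hcont.intervalIntegrable _ _),
      integral_const, smul_eq_mul]
    ring
  have hmodel : ∫ s in (x - t)..(x + t), M * |s - x| ^ α = 2 * t * (M * t ^ α / (α + 1)) := by
    rw [integral_const_mul, integral_comp_sub_right (fun u => |u| ^ α), sub_sub_cancel_left,
      add_sub_cancel_left, integral_abs_rpow_symm hα.le ht, Real.rpow_add_one' ht (by linarith)]
    ring
  rw [← hftc, ← hmodel]
  calc |∫ s in (x - t)..(x + t), (deriv f s - deriv f x)|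
      ≤ ∫ s in (x - t)..(x + t), |deriv f s - deriv f x| := abs_integral_le_integral_abs hle
    _ ≤ ∫ s in (x - t)..(x + t), M * |s - x| ^ α :=
      integral_mono_on hle ((hcont.sub continuous_const).abs.intervalIntegrable _ _)
        ((continuous_const.mul ((continuous_sub_right x).abs.rpow_const
          fun _ => Or.inr hα.le)).intervalIntegrable _ _) fun s _ => hHolder s x

theorem deriv_sup_bound_general (α M ε δ : ℝ) (hα : 0 < α)
    (hδ : 0 < δ)
    (φ : ℝ → ℝ)
    (hdiff : Differentiable ℝ φ)
    (hHolder : ∀ x y, |deriv φ x - deriv φ y| ≤ M * |x - y| ^ α)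
    (hεδ : ∀ x y, |x - y| > δ → |φ x - φ y| < ε * |x - y|) :
    ∀ x, |deriv φ x| < M / (α + 1) * δ ^ α + ε := by
  intro x
  obtain ⟨t, ht, htδ, h2t⟩ : ∃ t, 0 < t ∧ t ≤ δ ∧ δ < 2 * t :=
    ⟨3 * δ / 4, by positivity, by linarith, by linarith⟩
  have hM : 0 ≤ M := by simpa using (abs_nonneg _).trans (hHolder 1 0)
  have hchord : |φ (x + t) - φ (x - t)| < 2 * t * ε := by
    have hgap : |x + t - (x - t)| = 2 * t := by rw [abs_of_pos (by linarith)]; ring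
    simpa only [hgap, mul_comm ε] using hεδ (x + t) (x - t) (by rw [hgap]; exact h2t)
  have htaylor := abs_sub_sub_two_mul_deriv_le hα hdiff hHolder x ht.le
  have hderiv : |deriv φ x| < M * t ^ α / (α + 1) + ε := by
    have htri := abs_sub_abs_le_abs_sub (2 * t * deriv φ x) (φ (x + t) - φ (x - t))
    rw [abs_sub_comm (2 * t * deriv φ x), abs_mul,
      abs_of_pos (by linarith : (0 : ℝ) < 2 * t)] at htri
    refine lt_of_mul_lt_mul_left ?_ (by linarith : (0 : ℝ) ≤ 2 * t)
    linarith
  have hpow : M * t ^ α / (α + 1) ≤ M / (α + 1) * δ ^ α := by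
    rw [div_mul_eq_mul_div]
    gcongr
  linarith

/-- Let phi : ℝ → ℝ be a C^{1+alpha} 1-periodic function whose derivative
has alpha-Hölder seminorm at most M, and suppose |phi(x) - phi(y)| < eps |x - y| whenever
|x - y| > delta. Then sup|phi'| < (M/(alpha+1)) delta^alpha + eps. -/
theorem deriv_sup_bound (α M ε δ : ℝ) (hα : 0 < α) (hα1 : α ≤ 1)
    (hM : 0 < M) (hε : 0 < ε) (hδ : 0 < δ)
    (φ : ℝ → ℝ)
    (hper : ∀ x, φ (x + 1) = φ x)
    (hdiff : Differentiable ℝ φ)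
    (hHolder : ∀ x y, |deriv φ x - deriv φ y| ≤ M * |x - y| ^ α)
    (hεδ : ∀ x y, |x - y| > δ → |φ x - φ y| < ε * |x - y|) :
    ∀ x, |deriv φ x| < M / (α + 1) * δ ^ α + ε :=
  deriv_sup_bound_general α M ε δ hα hδ φ hdiff hHolder hεδ
end

section
/- Let L ≥ 0 and define V(φ) = sup_{0<d_θ(x,y)≤θ} |φ(x)−φ(y)|/d_θ(x,y) and ‖φ‖_L = max(‖φ‖_∞, V(φ)/(2L)) on Lipschitz functions on the full shift Σ⁺. Suppose φ₁, φ₂ are Lipschitz and both φ₂ − φ₁ ≥ 0 and φ₂ + φ₁ ≥ 0, and additionally φ₂ − φ₁ and φ₂ + φ₁ have d_θ-Lipschitz constant at most L·(sup of themselves) in the cone sense, i.e., V(φ₂±φ₁) ≤ L‖φ₂±φ₁‖_∞. Then ‖φ₁‖_L ≤ ‖φ₂‖_L. -/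
open scoped BigOperators

open Classical in
/-- The metric d_theta(x,y) = theta^(min{n : x_n ≠ y_n}) on the one-sided full shift. -/
noncomputable def dtheta {k : ℕ} (θ : ℝ) (x y : ℕ → Fin k) : ℝ :=
  if x = y then 0 else θ ^ sInf {n : ℕ | x n ≠ y n}

/-- The left shift map. -/
def shift {k : ℕ} (x : ℕ → Fin k) : ℕ → Fin k := fun n => x (n + 1)

/-- Prepending a word of length m: the inverse branch of the m-fold shift. -/
def prepend {k m : ℕ} (w : Fin m → Fin k) (x : ℕ → Fin k) : ℕ → Fin k :=
  fun n => if h : n < m then w ⟨n, h⟩ else x (n - m)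

/-- The Birkhoff sum S_m psi. -/
noncomputable def birkhoff {k : ℕ} (ψ : (ℕ → Fin k) → ℝ) (m : ℕ) (x : ℕ → Fin k) : ℝ :=
  ∑ j ∈ Finset.range m, ψ (shift^[j] x)

/-- The supremum norm of a function on the shift space. -/
noncomputable def supnorm {k : ℕ} (φ : (ℕ → Fin k) → ℝ) : ℝ := ⨆ x, |φ x|

/-- The seminorm V(phi) = sup over pairs with 0 < d_theta(x,y) ≤ theta of
|phi x - phi y| / d_theta(x,y). -/
noncomputable def Vsemi {k : ℕ} (θ : ℝ) (φ : (ℕ → Fin k) → ℝ) : ℝ :=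
  ⨆ p : {p : ((ℕ → Fin k) × (ℕ → Fin k)) //
      0 < dtheta θ p.1 p.2 ∧ dtheta θ p.1 p.2 ≤ θ},
    |φ p.1.1 - φ p.1.2| / dtheta θ p.1.1 p.1.2

/-- The norm ‖phi‖_L = max(‖phi‖_∞, V(phi)/(2L)). -/
noncomputable def normL {k : ℕ} (θ L : ℝ) (φ : (ℕ → Fin k) → ℝ) : ℝ :=
  max (supnorm φ) (Vsemi θ φ / (2 * L))

/-- if phi₂ - phi₁ ≥ 0 and phi₂ + phi₁ ≥ 0 and both satisfy the cone-type
bound V(phi₂ ± phi₁) ≤ L ‖phi₂ ± phi₁‖_∞, then ‖phi₁‖_L ≤ ‖phi₂‖_L. -/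
theorem normL_mono {k : ℕ} (θ L K₁ K₂ : ℝ) (hθ : 0 < θ) (hθ1 : θ < 1) (hL : 0 < L)
    (φ₁ φ₂ : (ℕ → Fin k) → ℝ)
    (hlip1 : ∀ x y, |φ₁ x - φ₁ y| ≤ K₁ * dtheta θ x y)
    (hlip2 : ∀ x y, |φ₂ x - φ₂ y| ≤ K₂ * dtheta θ x y)
    (hpos1 : ∀ x, 0 ≤ φ₂ x - φ₁ x) (hpos2 : ∀ x, 0 ≤ φ₂ x + φ₁ x)
    (hV1 : Vsemi θ (fun x => φ₂ x - φ₁ x) ≤ L * supnorm (fun x => φ₂ x - φ₁ x))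
    (hV2 : Vsemi θ (fun x => φ₂ x + φ₁ x) ≤ L * supnorm (fun x => φ₂ x + φ₁ x)) :
    normL θ L φ₁ ≤ normL θ L φ₂ := by
  classical
  -- basic facts about dtheta
  have hd_nonneg : ∀ x y : ℕ → Fin k, 0 ≤ dtheta θ x y := by
    intro x y; unfold dtheta; split
    · exact le_refl 0
    · positivity
  have hd_le_one : ∀ x y : ℕ → Fin k, dtheta θ x y ≤ 1 := by
    intro x y; unfold dtheta; split
    · norm_num
    · exact pow_le_one₀ hθ.le hθ1.le
  have habs1 : ∀ x, |φ₁ x| ≤ φ₂ x := by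
    intro x
    have h1 := hpos1 x; have h2 := hpos2 x
    rw [abs_le]; constructor <;> linarith
  have hφ₂nn : ∀ x, 0 ≤ φ₂ x := fun x => le_trans (abs_nonneg _) (habs1 x)
  have hsup2_nn : 0 ≤ supnorm φ₂ := Real.iSup_nonneg fun x => abs_nonneg _
  -- supnorm φ₂ bounds |φ₂ x| pointwise (need BddAbove in nonempty case)
  have hpt2 : ∀ x, |φ₂ x| ≤ supnorm φ₂ := by
    intro x
    have hbdd : BddAbove (Set.range fun y => |φ₂ y|) := by
      refine ⟨|φ₂ x| + |K₂|, ?_⟩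
      rintro _ ⟨y, rfl⟩
      have h := hlip2 y x
      have hd1 := hd_le_one y x
      have hd0 := hd_nonneg y x
      have : K₂ * dtheta θ y x ≤ |K₂| := by
        calc K₂ * dtheta θ y x ≤ |K₂| * dtheta θ y x :=
              mul_le_mul_of_nonneg_right (le_abs_self K₂) hd0
          _ ≤ |K₂| * 1 := mul_le_mul_of_nonneg_left hd1 (abs_nonneg _)
          _ = |K₂| := mul_one _
      have := abs_sub_abs_le_abs_sub (φ₂ y) (φ₂ x)
      linarith
    exact le_ciSup hbdd x
  -- sup norm comparison
  have hsup : supnorm φ₁ ≤ supnorm φ₂ := by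
    rcases isEmpty_or_nonempty (ℕ → Fin k) with hE | hNE
    · unfold supnorm
      rw [Real.iSup_of_isEmpty, Real.iSup_of_isEmpty]
    · refine Real.iSup_le (fun x => ?_) hsup2_nn
      exact le_trans (le_trans (habs1 x) (le_abs_self _)) (hpt2 x)
  -- sup norms of φ₂ ± φ₁ are at most 2 * supnorm φ₂
  have hsupA : supnorm (fun x => φ₂ x + φ₁ x) ≤ 2 * supnorm φ₂ := by
    refine Real.iSup_le (fun x => ?_) (by linarith)
    have : |φ₂ x + φ₁ x| = φ₂ x + φ₁ x := abs_of_nonneg (hpos2 x)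
    have h1 := habs1 x
    have h2 := hpt2 x
    have h3 : φ₂ x ≤ |φ₂ x| := le_abs_self _
    have h4 : φ₁ x ≤ |φ₁ x| := le_abs_self _
    linarith
  have hsupB : supnorm (fun x => φ₂ x - φ₁ x) ≤ 2 * supnorm φ₂ := by
    refine Real.iSup_le (fun x => ?_) (by linarith)
    have : |φ₂ x - φ₁ x| = φ₂ x - φ₁ x := abs_of_nonneg (hpos1 x)
    have h1 := habs1 x
    have h2 := hpt2 x
    have h3 : φ₂ x ≤ |φ₂ x| := le_abs_self _
    have h4 : -φ₁ x ≤ |φ₁ x| := neg_le_abs _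
    linarith
  -- V(φ₁) ≤ 2 L supnorm φ₂
  have hV : Vsemi θ φ₁ ≤ 2 * L * supnorm φ₂ := by
    refine Real.iSup_le (fun p => ?_) (by positivity)
    obtain ⟨⟨x, y⟩, hd0, hdθ⟩ := p
    simp only
    set d := dtheta θ x y with hd
    -- bounded-above facts for the two V-suprema
    have hbddA : BddAbove (Set.range fun q : {p : ((ℕ → Fin k) × (ℕ → Fin k)) //
        0 < dtheta θ p.1 p.2 ∧ dtheta θ p.1 p.2 ≤ θ} =>
        |(φ₂ q.1.1 + φ₁ q.1.1) - (φ₂ q.1.2 + φ₁ q.1.2)| / dtheta θ q.1.1 q.1.2) := by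
      refine ⟨K₁ + K₂, ?_⟩
      rintro _ ⟨⟨⟨u, v⟩, hq0, hqθ⟩, rfl⟩
      simp only
      rw [div_le_iff₀ hq0]
      have h1 := hlip1 u v; have h2 := hlip2 u v
      have := abs_add_le (φ₂ u - φ₂ v) (φ₁ u - φ₁ v)
      have heq : (φ₂ u + φ₁ u) - (φ₂ v + φ₁ v) = (φ₂ u - φ₂ v) + (φ₁ u - φ₁ v) := by ring
      rw [heq]
      nlinarith [abs_add_le (φ₂ u - φ₂ v) (φ₁ u - φ₁ v)]
    have hbddB : BddAbove (Set.range fun q : {p : ((ℕ → Fin k) × (ℕ → Fin k)) //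
        0 < dtheta θ p.1 p.2 ∧ dtheta θ p.1 p.2 ≤ θ} =>
        |(φ₂ q.1.1 - φ₁ q.1.1) - (φ₂ q.1.2 - φ₁ q.1.2)| / dtheta θ q.1.1 q.1.2) := by
      refine ⟨K₁ + K₂, ?_⟩
      rintro _ ⟨⟨⟨u, v⟩, hq0, hqθ⟩, rfl⟩
      simp only
      rw [div_le_iff₀ hq0]
      have h1 := hlip1 u v; have h2 := hlip2 u v
      have heq : (φ₂ u - φ₁ u) - (φ₂ v - φ₁ v) = (φ₂ u - φ₂ v) - (φ₁ u - φ₁ v) := by ring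
      rw [heq]
      nlinarith [abs_sub (φ₂ u - φ₂ v) (φ₁ u - φ₁ v)]
    have hQA : |(φ₂ x + φ₁ x) - (φ₂ y + φ₁ y)| / d ≤ Vsemi θ (fun x => φ₂ x + φ₁ x) := by
      exact le_ciSup hbddA ⟨⟨x, y⟩, hd0, hdθ⟩
    have hQB : |(φ₂ x - φ₁ x) - (φ₂ y - φ₁ y)| / d ≤ Vsemi θ (fun x => φ₂ x - φ₁ x) := by
      exact le_ciSup hbddB ⟨⟨x, y⟩, hd0, hdθ⟩
    have hVA : Vsemi θ (fun x => φ₂ x + φ₁ x) ≤ 2 * L * supnorm φ₂ := by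
      calc Vsemi θ (fun x => φ₂ x + φ₁ x) ≤ L * supnorm (fun x => φ₂ x + φ₁ x) := hV2
        _ ≤ L * (2 * supnorm φ₂) := mul_le_mul_of_nonneg_left hsupA hL.le
        _ = 2 * L * supnorm φ₂ := by ring
    have hVB : Vsemi θ (fun x => φ₂ x - φ₁ x) ≤ 2 * L * supnorm φ₂ := by
      calc Vsemi θ (fun x => φ₂ x - φ₁ x) ≤ L * supnorm (fun x => φ₂ x - φ₁ x) := hV1
        _ ≤ L * (2 * supnorm φ₂) := mul_le_mul_of_nonneg_left hsupB hL.le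
        _ = 2 * L * supnorm φ₂ := by ring
    -- |φ₁ x - φ₁ y| ≤ (|A x - A y| + |B x - B y|)/2
    have hkey : |φ₁ x - φ₁ y| ≤
        (|(φ₂ x + φ₁ x) - (φ₂ y + φ₁ y)| + |(φ₂ x - φ₁ x) - (φ₂ y - φ₁ y)|) / 2 := by
      have heq : φ₁ x - φ₁ y =
          (((φ₂ x + φ₁ x) - (φ₂ y + φ₁ y)) - ((φ₂ x - φ₁ x) - (φ₂ y - φ₁ y))) / 2 := by ring
      rw [heq, abs_div]
      have := abs_sub ((φ₂ x + φ₁ x) - (φ₂ y + φ₁ y)) ((φ₂ x - φ₁ x) - (φ₂ y - φ₁ y))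
      rw [abs_of_pos (by norm_num : (0:ℝ) < 2)]
      linarith
    rw [div_le_iff₀ hd0] at hQA hQB ⊢
    nlinarith
  -- conclude
  unfold normL
  refine max_le ?_ ?_
  · exact le_max_of_le_left hsup
  · refine le_max_of_le_left ?_
    rw [div_le_iff₀ (by linarith : (0:ℝ) < 2 * L)]
    calc Vsemi θ φ₁ ≤ 2 * L * supnorm φ₂ := hV
      _ = supnorm φ₂ * (2 * L) := by ring
end

section
/- Let ψ be Lipschitz on the full shift Σ⁺ on k symbols with seminorm |ψ|_θ, and let θ < ξ < 1 and L ≥ θ|ψ|_θ/(ξ−θ). Then the transfer operator L_ψ maps the cone C_L into C_{ξL}: if φ ∈ C_L then L_ψφ ∈ C_{ξL}. -/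
open scoped BigOperators

/-- The Ruelle transfer operator on the full shift on k symbols:
(L_psi phi)(x) = sum over the k preimages i·x of x of exp(psi(i·x)) phi(i·x). -/
noncomputable def transferOp {k : ℕ} (ψ : (ℕ → Fin k) → ℝ)
    (φ : (ℕ → Fin k) → ℝ) : (ℕ → Fin k) → ℝ :=
  fun x => ∑ i : Fin k,
    Real.exp (ψ (prepend (fun _ : Fin 1 => i) x)) * φ (prepend (fun _ : Fin 1 => i) x)

lemma dtheta_nonneg {k : ℕ} {θ : ℝ} (hθ : 0 ≤ θ) (x y : ℕ → Fin k) :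
    0 ≤ dtheta θ x y := by
  unfold dtheta; split
  · exact le_refl 0
  · exact pow_nonneg hθ _

lemma dtheta_le_one {k : ℕ} {θ : ℝ} (hθ0 : 0 ≤ θ) (hθ1 : θ ≤ 1) (x y : ℕ → Fin k) :
    dtheta θ x y ≤ 1 := by
  unfold dtheta; split
  · norm_num
  · exact pow_le_one₀ hθ0 hθ1

lemma prepend_single_succ {k : ℕ} (i : Fin k) (x : ℕ → Fin k) (n : ℕ) :
    prepend (fun _ : Fin 1 => i) x (n + 1) = x n := by
  simp [prepend]

lemma prepend_single_zero {k : ℕ} (i : Fin k) (x : ℕ → Fin k) :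
    prepend (fun _ : Fin 1 => i) x 0 = i := by
  simp [prepend]

lemma prepend_shift {k : ℕ} (x : ℕ → Fin k) :
    prepend (fun _ : Fin 1 => x 0) (shift x) = x := by
  funext n
  cases n with
  | zero => exact prepend_single_zero _ _
  | succ m => rw [prepend_single_succ]; rfl

lemma dtheta_prepend {k : ℕ} (θ : ℝ) (i : Fin k) (x y : ℕ → Fin k) :
    dtheta θ (prepend (fun _ : Fin 1 => i) x) (prepend (fun _ : Fin 1 => i) y)
      = θ * dtheta θ x y := by
  by_cases hxy : x = y
  · subst hxy
    simp [dtheta]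
  · have hpxy : prepend (fun _ : Fin 1 => i) x ≠ prepend (fun _ : Fin 1 => i) y := by
      intro h
      apply hxy
      funext n
      have := congrFun h (n + 1)
      rwa [prepend_single_succ, prepend_single_succ] at this
    have hS : {n : ℕ | x n ≠ y n}.Nonempty := by
      by_contra h
      apply hxy
      funext n
      by_contra hn
      exact h ⟨n, hn⟩
    set m := sInf {n : ℕ | x n ≠ y n} with hm
    have hmem : x m ≠ y m := Nat.sInf_mem hS
    have hinf : sInf {n : ℕ | prepend (fun _ : Fin 1 => i) x n ≠
        prepend (fun _ : Fin 1 => i) y n} = m + 1 := by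
      apply IsLeast.csInf_eq
      constructor
      · show prepend (fun _ : Fin 1 => i) x (m + 1) ≠ prepend (fun _ : Fin 1 => i) y (m + 1)
        rw [prepend_single_succ, prepend_single_succ]; exact hmem
      · intro j hj
        cases j with
        | zero =>
          exfalso
          apply hj
          rw [prepend_single_zero, prepend_single_zero]
        | succ j' =>
          have hj' : prepend (fun _ : Fin 1 => i) x (j' + 1)
              ≠ prepend (fun _ : Fin 1 => i) y (j' + 1) := hj
          rw [prepend_single_succ, prepend_single_succ] at hj'
          have := Nat.sInf_le (show j' ∈ {n : ℕ | x n ≠ y n} from hj')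
          omega
    simp only [dtheta, if_neg hxy, if_neg hpxy, hinf, ← hm, pow_succ]
    ring

/-- for theta < xi < 1 and L ≥ theta|psi|_theta/(xi - theta), the transfer
operator maps the cone C_L into C_{xi L}: if phi is Lipschitz, nonnegative, not
identically zero, and satisfies the C_L cone inequality, then L_psi phi is nonnegative,
not identically zero, and satisfies the C_{xi L} cone inequality. -/
theorem transfer_maps_cone {k : ℕ} (θ ξ L Lψ Kφ : ℝ)
    (hθ : 0 < θ) (hθξ : θ < ξ) (hξ : ξ < 1) (hLψ : 0 ≤ Lψ)
    (hL : θ * Lψ / (ξ - θ) ≤ L)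
    (ψ φ : (ℕ → Fin k) → ℝ)
    (hψ : ∀ x y, |ψ x - ψ y| ≤ Lψ * dtheta θ x y)
    (hφlip : ∀ x y, |φ x - φ y| ≤ Kφ * dtheta θ x y)
    (hnonneg : ∀ x, 0 ≤ φ x) (hne : ∃ x, φ x ≠ 0)
    (hcone : ∀ x y, dtheta θ x y ≤ θ → φ x ≤ Real.exp (L * dtheta θ x y) * φ y) :
    (∀ x, 0 ≤ transferOp ψ φ x) ∧ (∃ x, transferOp ψ φ x ≠ 0) ∧
      (∀ x y, dtheta θ x y ≤ θ →
        transferOp ψ φ x ≤ Real.exp (ξ * L * dtheta θ x y) * transferOp ψ φ y) := by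
  have hθ1 : θ ≤ 1 := le_of_lt (lt_trans hθξ hξ)
  have hξθ : 0 < ξ - θ := by linarith
  have hkey : θ * Lψ + θ * L ≤ ξ * L := by
    have := (div_le_iff₀ hξθ).mp hL
    nlinarith
  have hL0 : 0 ≤ L := by
    have h1 : 0 ≤ θ * Lψ / (ξ - θ) := by positivity
    linarith
  refine ⟨?_, ?_, ?_⟩
  · intro x
    apply Finset.sum_nonneg
    intro i _
    exact mul_nonneg (Real.exp_nonneg _) (hnonneg _)
  · obtain ⟨x, hx⟩ := hne
    have hxpos : 0 < φ x := lt_of_le_of_ne (hnonneg x) (Ne.symm hx)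
    refine ⟨shift x, ne_of_gt ?_⟩
    apply Finset.sum_pos'
    · intro i _
      exact mul_nonneg (Real.exp_nonneg _) (hnonneg _)
    · refine ⟨x 0, Finset.mem_univ _, ?_⟩
      rw [prepend_shift]
      positivity
  · intro x y hd
    have hd0 : 0 ≤ dtheta θ x y := dtheta_nonneg (le_of_lt hθ) x y
    have hd1 : dtheta θ x y ≤ 1 := dtheta_le_one (le_of_lt hθ) hθ1 x y
    unfold transferOp
    rw [Finset.mul_sum]
    apply Finset.sum_le_sum
    intro i _
    set px := prepend (fun _ : Fin 1 => i) x
    set py := prepend (fun _ : Fin 1 => i) y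
    have hdp : dtheta θ px py = θ * dtheta θ x y := dtheta_prepend θ i x y
    have hdpθ : dtheta θ px py ≤ θ := by
      rw [hdp]
      calc θ * dtheta θ x y ≤ θ * 1 := by
            exact mul_le_mul_of_nonneg_left hd1 (le_of_lt hθ)
        _ = θ := mul_one θ
    have hψle : ψ px ≤ ψ py + Lψ * (θ * dtheta θ x y) := by
      have := hψ px py
      rw [hdp] at this
      have h2 := le_trans (le_abs_self _) this
      linarith
    have hφle : φ px ≤ Real.exp (L * (θ * dtheta θ x y)) * φ py := by
      have := hcone px py hdpθ
      rwa [hdp] at this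
    calc Real.exp (ψ px) * φ px
        ≤ Real.exp (ψ py + Lψ * (θ * dtheta θ x y)) *
            (Real.exp (L * (θ * dtheta θ x y)) * φ py) := by
          apply mul_le_mul (Real.exp_le_exp.mpr hψle) hφle (hnonneg _)
            (Real.exp_nonneg _)
      _ = Real.exp (Lψ * (θ * dtheta θ x y) + L * (θ * dtheta θ x y)) *
            (Real.exp (ψ py) * φ py) := by
          rw [Real.exp_add, Real.exp_add]
          ring
      _ ≤ Real.exp (ξ * L * dtheta θ x y) * (Real.exp (ψ py) * φ py) := by
          apply mul_le_mul_of_nonneg_right _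
            (mul_nonneg (Real.exp_nonneg _) (hnonneg _))
          apply Real.exp_le_exp.mpr
          have : Lψ * (θ * dtheta θ x y) + L * (θ * dtheta θ x y)
              = (θ * Lψ + θ * L) * dtheta θ x y := by ring
          rw [this]
          exact mul_le_mul_of_nonneg_right hkey hd0
end

section
/- Let ν and νₙ be Borel probability measures on S¹ and suppose there exist C' > 0 and 0 < τ < 1 such that |∫φ dν − ∫φ dνₙ| ≤ C'‖φ‖_Lip τⁿ for all Lipschitz φ : S¹ → ℝ. Assume also ν has a density bounded above by C with respect to Lebesgue measure. Then there is K > 0 such that for all n and all x ∈ [0,1], |ν([0,x]) − νₙ([0,x])| ≤ K τ^{n/2}. -/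
/-!
The indicator of an arc `A` lies below the `ε⁻¹`-Lipschitz function `thickenedIndicator ε A`,
which is `1` on `A` and vanishes off the `ε`-thickening `A_ε`. Testing the Lipschitz convergence
against it gives `νₙ(A) ≤ ν(A_ε) + C'(1 + ε⁻¹)τⁿ`, and since `A_ε \ A` lies in the two `ε`-balls
around the endpoints, the density bound gives `ν(A_ε) ≤ ν(A) + 4Cε`. Applied to `[0, x]` and to
the complementary arc `[x, 1]`, which cover the circle and meet in a `ν`-null set, this one-sided
bound becomes two-sided; `ε = τ^(n/2)` balances the two error terms.
-/

open MeasureTheory Metric Set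

lemma Real.closedBall_subset_Icc_union_closedBall_union_closedBall {l r t : ℝ}
    (ht : t ∈ Icc l r) (ε : ℝ) : closedBall t ε ⊆ Icc l r ∪ closedBall l ε ∪ closedBall r ε := by
  intro s hs
  simp only [Real.closedBall_eq_Icc, mem_union, mem_Icc] at hs ht ⊢
  grind

namespace AddCircle

variable {T : ℝ}

lemma closedBall_coe_subset_image_closedBall (t ε : ℝ) :
    closedBall (t : AddCircle T) ε ⊆ (↑) '' closedBall t ε := by
  intro y hy
  obtain ⟨s, rfl⟩ := QuotientAddGroup.mk_surjective y
  have hs : s ∈ (↑) ⁻¹' closedBall (t : AddCircle T) ε := hy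
  rw [coe_real_preimage_closedBall_eq_iUnion, mem_iUnion] at hs
  obtain ⟨z, hz⟩ := hs
  refine ⟨s - z • T, ?_, by simp [coe_period]⟩
  rw [mem_closedBall, Real.dist_eq] at hz ⊢
  rwa [sub_sub, add_comm]

lemma image_closedBall_subset_closedBall_coe (t ε : ℝ) :
    ((↑) : ℝ → AddCircle T) '' closedBall t ε ⊆ closedBall (t : AddCircle T) ε := by
  rintro _ ⟨s, hs, rfl⟩
  rw [mem_closedBall, dist_eq_norm, ← coe_sub]
  exact QuotientAddGroup.norm_mk_le_norm.trans (mem_closedBall_iff_norm.1 hs)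

lemma thickening_image_Icc_subset (l r ε : ℝ) :
    thickening ε (((↑) : ℝ → AddCircle T) '' Icc l r) ⊆
      (↑) '' Icc l r ∪ closedBall (l : AddCircle T) ε ∪ closedBall (r : AddCircle T) ε := by
  intro y hy
  obtain ⟨_, ⟨t, ht, rfl⟩, hyt⟩ := mem_thickening_iff.1 hy
  obtain ⟨s, hs, rfl⟩ := closedBall_coe_subset_image_closedBall t ε (mem_closedBall.2 hyt.le)
  rcases Real.closedBall_subset_Icc_union_closedBall_union_closedBall ht ε hs with (h | h) | h
  · exact .inl (.inl ⟨s, h, rfl⟩)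
  · exact .inl (.inr (image_closedBall_subset_closedBall_coe l ε ⟨s, h, rfl⟩))
  · exact .inr (image_closedBall_subset_closedBall_coe r ε ⟨s, h, rfl⟩)

lemma image_Icc_union_image_Icc [Fact (0 < T)] {x : ℝ} (hx : x ∈ Icc 0 T) :
    ((↑) : ℝ → AddCircle T) '' Icc 0 x ∪ (↑) '' Icc x T = univ := by
  rw [← image_union, Icc_union_Icc_eq_Icc hx.1 hx.2]
  simpa using coe_image_Icc_eq T (0 : ℝ)

lemma image_Icc_inter_image_Icc_subset [Fact (0 < T)] (x : ℝ) :
    ((↑) : ℝ → AddCircle T) '' Icc 0 x ∩ (↑) '' Icc x T ⊆ {0, (x : AddCircle T)} := by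
  rintro _ ⟨⟨d, ⟨hd0, hdx⟩, rfl⟩, ⟨c, ⟨hxc, hcT⟩, hcd⟩⟩
  rcases hcT.lt_or_eq with hcT | rfl
  · have hdc : c = d := (coe_eq_coe_iff_of_mem_Ico (a := 0)
      (by simp only [zero_add, mem_Ico]; constructor <;> linarith)
      (by simp only [zero_add, mem_Ico]; constructor <;> linarith)).1 hcd
    right
    rw [mem_singleton_iff, ← hcd, le_antisymm (hdc ▸ hdx) hxc]
  · left
    rw [← hcd, coe_period]

end AddCircle

lemma measureReal_le_measureReal_thickening_add {X : Type*} [PseudoMetricSpace X]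
    [MeasurableSpace X] [OpensMeasurableSpace X] {μ ν : Measure X} [IsFiniteMeasure μ]
    [IsFiniteMeasure ν] {A : Set X} (hA : MeasurableSet A) {ε δ : ℝ} (hε : 0 < ε)
    (h : ∀ φ : X → ℝ, (∀ a b, |φ a - φ b| ≤ ε⁻¹ * dist a b) → (∀ a, |φ a| ≤ 1) →
      ∫ a, φ a ∂μ ≤ ∫ a, φ a ∂ν + δ) :
    μ.real A ≤ ν.real (thickening ε A) + δ := by
  set φ : X → ℝ := fun x => (thickenedIndicator hε A x : ℝ)
  have hφμ : Integrable φ μ := (thickenedIndicator hε A).integrable_of_nnreal (μ := μ)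
  have hφν : Integrable φ ν := (thickenedIndicator hε A).integrable_of_nnreal (μ := ν)
  have hφ_lip : ∀ a b, |φ a - φ b| ≤ ε⁻¹ * dist a b := fun a b => by
    simpa [φ, NNReal.dist_eq, hε.le] using (lipschitzWith_thickenedIndicator hε A).dist_le_mul a b
  have hφ_le_one : ∀ a, |φ a| ≤ 1 := fun a => by
    simpa [φ, abs_of_nonneg] using thickenedIndicator_le_one hε A a
  have hφ_ge : A.indicator 1 ≤ φ := fun a => by
    by_cases ha : a ∈ A
    · simp only [φ, indicator_of_mem ha, Pi.one_apply, thickenedIndicator_one hε A ha,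
        NNReal.coe_one, le_refl]
    · simp [φ, ha]
  have hφ_le : φ ≤ (thickening ε A).indicator 1 := fun a => by
    by_cases ha : a ∈ thickening ε A
    · simpa [φ, ha] using thickenedIndicator_le_one hε A a
    · simp only [φ, indicator_of_notMem ha, thickenedIndicator_zero hε A ha, NNReal.coe_zero,
        le_refl]
  calc μ.real A = ∫ a, A.indicator 1 a ∂μ := (integral_indicator_one hA).symm
    _ ≤ ∫ a, φ a ∂μ := integral_mono ((integrable_const 1).indicator hA) hφμ hφ_ge
    _ ≤ ∫ a, φ a ∂ν + δ := h φ hφ_lip hφ_le_one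
    _ ≤ ∫ a, (thickening ε A).indicator 1 a ∂ν + δ := by
      linarith [integral_mono hφν
        ((integrable_const 1).indicator isOpen_thickening.measurableSet) hφ_le]
    _ = ν.real (thickening ε A) + δ := by
      rw [integral_indicator_one isOpen_thickening.measurableSet]

lemma abs_measureReal_sub_le_of_union_eq_univ {α : Type*} [MeasurableSpace α]
    {μ ν : Measure α} [IsProbabilityMeasure μ] [IsProbabilityMeasure ν] {A B : Set α}
    (hB : MeasurableSet B) (hAB : A ∪ B = univ) (hν : ν.real (A ∩ B) = 0) {δ : ℝ}
    (hμA : μ.real A ≤ ν.real A + δ) (hμB : μ.real B ≤ ν.real B + δ) :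
    |ν.real A - μ.real A| ≤ δ := by
  have hνAB : ν.real A + ν.real B = 1 := by
    rw [← measureReal_union_add_inter hB, hAB, hν, probReal_univ, add_zero]
  have hμAB : 1 ≤ μ.real A + μ.real B := by
    simpa [hAB] using measureReal_union_le (μ := μ) A B
  rw [abs_sub_le_iff]
  constructor <;> linarith

namespace AddCircle

variable {T : ℝ} [Fact (0 < T)] {ν : Measure (AddCircle T)} {C : ℝ}

lemma measureReal_closedBall_le_of_le_smul_volume (hC : 0 ≤ C)
    (hdens : ∀ s, MeasurableSet s → ν s ≤ ENNReal.ofReal C * volume s) (z : AddCircle T)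
    {ε : ℝ} (hε : 0 ≤ ε) : ν.real (closedBall z ε) ≤ 2 * C * ε := by
  have h := hdens _ (measurableSet_closedBall (x := z) (ε := ε))
  rw [volume_closedBall, ← ENNReal.ofReal_mul hC] at h
  calc ν.real (closedBall z ε) ≤ C * min T (2 * ε) :=
        ENNReal.toReal_le_of_le_ofReal
          (mul_nonneg hC (le_min (Fact.out : 0 < T).le (by linarith))) h
    _ ≤ 2 * C * ε := by nlinarith [min_le_right T (2 * ε)]

lemma measureReal_thickening_image_Icc_le [IsFiniteMeasure ν] (hC : 0 ≤ C)
    (hdens : ∀ s, MeasurableSet s → ν s ≤ ENNReal.ofReal C * volume s) (l r : ℝ) {ε : ℝ}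
    (hε : 0 ≤ ε) :
    ν.real (thickening ε (((↑) : ℝ → AddCircle T) '' Icc l r)) ≤
      ν.real ((↑) '' Icc l r) + 4 * C * ε := by
  have hl := measureReal_closedBall_le_of_le_smul_volume hC hdens (l : AddCircle T) hε
  have hr := measureReal_closedBall_le_of_le_smul_volume hC hdens (r : AddCircle T) hε
  calc _ ≤ ν.real ((↑) '' Icc l r ∪ closedBall (l : AddCircle T) ε ∪
          closedBall (r : AddCircle T) ε) :=
        measureReal_mono (thickening_image_Icc_subset l r ε)
    _ ≤ ν.real ((↑) '' Icc l r) + ν.real (closedBall (l : AddCircle T) ε) +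
        ν.real (closedBall (r : AddCircle T) ε) :=
        (measureReal_union_le _ _).trans (by gcongr; exact measureReal_union_le _ _)
    _ ≤ _ := by linarith

lemma measureReal_image_Icc_inter_image_Icc [IsFiniteMeasure ν] (hC : 0 ≤ C)
    (hdens : ∀ s, MeasurableSet s → ν s ≤ ENNReal.ofReal C * volume s) (x : ℝ) :
    ν.real (((↑) : ℝ → AddCircle T) '' Icc 0 x ∩ (↑) '' Icc x T) = 0 := by
  have hatom : ∀ z : AddCircle T, ν.real {z} ≤ 0 := fun z => by
    simpa [closedBall_zero] using measureReal_closedBall_le_of_le_smul_volume hC hdens z le_rfl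
  refine le_antisymm ?_ measureReal_nonneg
  calc _ ≤ ν.real {0, (x : AddCircle T)} := measureReal_mono (image_Icc_inter_image_Icc_subset x)
    _ ≤ ν.real {0} + ν.real {(x : AddCircle T)} := measureReal_union_le _ _
    _ ≤ 0 := by linarith [hatom 0, hatom x]

end AddCircle

/-- if probability measures nu_n converge to nu effectively against
Lipschitz test functions (with rate C' ‖phi‖_Lip tau^n) and nu has a density bounded by C
with respect to Lebesgue measure on the circle, then the cumulative distribution
functions converge at rate tau^{n/2}: there is K > 0 such that for all n and x ∈ [0,1],
|nu([0,x]) - nu_n([0,x])| ≤ K tau^{n/2}. -/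
theorem cdf_effective_convergence (C C' τ : ℝ)
    (hC : 0 < C) (hC' : 0 < C') (hτ0 : 0 < τ) (hτ1 : τ < 1)
    (ν : Measure (AddCircle (1 : ℝ))) (νn : ℕ → Measure (AddCircle (1 : ℝ)))
    [IsProbabilityMeasure ν] [∀ n, IsProbabilityMeasure (νn n)]
    (hconv : ∀ (n : ℕ) (φ : AddCircle (1 : ℝ) → ℝ) (K Mb : ℝ),
      (∀ a b, |φ a - φ b| ≤ K * dist a b) → (∀ a, |φ a| ≤ Mb) →
      |(∫ a, φ a ∂ν) - ∫ a, φ a ∂(νn n)| ≤ C' * (Mb + K) * τ ^ n)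
    (hdens : ∀ s : Set (AddCircle (1 : ℝ)), MeasurableSet s →
      ν s ≤ ENNReal.ofReal C * volume s) :
    ∃ K > 0, ∀ (n : ℕ) (x : ℝ), x ∈ Set.Icc (0 : ℝ) 1 →
      |(ν ((fun t : ℝ => (t : AddCircle (1 : ℝ))) '' Set.Icc 0 x)).toReal -
          ((νn n) ((fun t : ℝ => (t : AddCircle (1 : ℝ))) '' Set.Icc 0 x)).toReal| ≤
        K * τ ^ ((n : ℝ) / 2) := by
  have : Fact ((0 : ℝ) < 1) := ⟨one_pos⟩
  refine ⟨4 * C + 2 * C', by positivity, fun n x hx => ?_⟩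
  set ε := τ ^ ((n : ℝ) / 2)
  have hε0 : 0 < ε := by positivity
  have hε1 : ε ≤ 1 := Real.rpow_le_one hτ0.le hτ1.le (by positivity)
  have hτn : τ ^ n = ε ^ 2 := by
    rw [← Real.rpow_natCast, ← Real.rpow_mul_natCast hτ0.le]; ring_nf
  have harc : ∀ l r : ℝ, MeasurableSet (((↑) : ℝ → AddCircle (1 : ℝ)) '' Icc l r) := fun l r =>
    (isCompact_Icc.image (AddCircle.continuous_mk' 1)).isClosed.measurableSet
  have hupper : ∀ l r : ℝ, (νn n).real ((↑) '' Icc l r) ≤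
      ν.real ((↑) '' Icc l r) + (4 * C * ε + C' * (1 + ε⁻¹) * τ ^ n) := fun l r => by
    have hthick := measureReal_le_measureReal_thickening_add (μ := νn n) (ν := ν)
      (δ := C' * (1 + ε⁻¹) * τ ^ n) (harc l r) hε0 fun φ hlip hbd => by
        linarith [(abs_le.1 (hconv n φ ε⁻¹ 1 hlip hbd)).1]
    linarith [AddCircle.measureReal_thickening_image_Icc_le hC.le hdens l r hε0.le]
  have hcdf := abs_measureReal_sub_le_of_union_eq_univ (harc x 1)
    (AddCircle.image_Icc_union_image_Icc hx)
    (AddCircle.measureReal_image_Icc_inter_image_Icc hC.le hdens x) (hupper 0 x) (hupper x 1)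
  have hrate : (1 + ε⁻¹) * ε ^ 2 ≤ 2 * ε := by
    rw [add_mul, inv_mul_eq_div, sq, mul_div_assoc, div_self hε0.ne', mul_one]; nlinarith
  simp only [measureReal_def] at hcdf
  refine hcdf.trans ?_
  rw [hτn]
  linarith [mul_le_mul_of_nonneg_left hrate hC'.le]
end
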